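/- arXiv:1701.05692 — 2 statements merged into one kernel-verified Lean document; each statement's English description precedes it below -/
import Mathlib

section
/- Let X be a topological manifold, let K ⊆ X be a compact connected deformation retract of X, and let (f_k) be a sequence of continuous maps from X to a manifold Y converging uniformly on K to a continuous map f : X → Y. Then for all sufficiently large k, the induced homomorphisms (f_k)_* and f_* on the fundamental group π₁(X, x₀) (with base point x₀ ∈ K) coincide. -/
/-!
Retracting onto `K` replaces a loop `γ` at `x₀` by the freely homotopic loop `r ∘ γ` in `K`, on
which `f k` and `g` are uniformly close. Over the compact set `g '' K` the manifold `Y` has a scale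
`ε` below which balls lie in simply connected chart neighbourhoods, and a finer scale `η` at which
close points are joined by `ε / 2`-short paths. Join `f k (r (γ t))` to `g (r (γ t))` by short
paths: for nearby times the resulting squares lie in one simply connected set, so they commute up
to homotopy, and by connectedness of the parameter line they commute globally. The two loops are
therefore conjugate by a path, hence freely homotopic.
-/

open Filter unitInterval

/-- Two loops `a, b : [0,1] → Y` (with matching endpoints) are freely homotopic:
there is a homotopy through loops from `a` to `b`. -/
def FreelyHomotopicLoops {Y : Type*} [TopologicalSpace Y] (a b : unitInterval → Y) : Prop :=
  ∃ H : unitInterval × unitInterval → Y, Continuous H ∧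
    (∀ t, H (0, t) = a t) ∧ (∀ t, H (1, t) = b t) ∧ ∀ s, H (s, 0) = H (s, 1)

open Metric Set Topology

section FreeHomotopy

variable {X Y : Type*} [TopologicalSpace X] [TopologicalSpace Y]

theorem freelyHomotopicLoops_iff_exists_path_family {a b : I → Y} :
    FreelyHomotopicLoops a b ↔
      ∃ P : ∀ t, Path (a t) (b t), Continuous ↿P ∧ ⇑(P 0) = ⇑(P 1) := by
  constructor
  · rintro ⟨H, hH, h0, h1, hloop⟩
    refine ⟨fun t => ⟨⟨fun s => H (s, t), by fun_prop⟩, h0 t, h1 t⟩, hH.comp continuous_swap,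
      funext hloop⟩
  · rintro ⟨P, hP, hloop⟩
    exact ⟨fun p => P p.2 p.1, hP.comp continuous_swap, fun t => (P t).source,
      fun t => (P t).target, congrFun hloop⟩

theorem FreelyHomotopicLoops.trans {a b c : I → Y} (hab : FreelyHomotopicLoops a b)
    (hbc : FreelyHomotopicLoops b c) : FreelyHomotopicLoops a c := by
  rw [freelyHomotopicLoops_iff_exists_path_family] at hab hbc ⊢
  obtain ⟨P, hP, hPloop⟩ := hab
  obtain ⟨Q, hQ, hQloop⟩ := hbc
  exact ⟨fun t => (P t).trans (Q t), Path.trans_continuous_family P hP Q hQ, by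
    ext s; simp [Path.trans_apply, hPloop, hQloop]⟩

theorem FreelyHomotopicLoops.of_continuous_family {x : I → Y} (γ : ∀ s, Path (x s) (x s))
    (hγ : Continuous ↿γ) : FreelyHomotopicLoops (γ 0) (γ 1) :=
  ⟨↿γ, hγ, fun _ => rfl, fun _ => rfl, fun s => (γ s).source.trans (γ s).target.symm⟩

theorem Path.Homotopic.freelyHomotopicLoops {x : Y} {p q : Path x x} (h : p.Homotopic q) :
    FreelyHomotopicLoops p q := by
  obtain ⟨F⟩ := h
  exact ⟨F, F.continuous, F.apply_zero, F.apply_one,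
    fun s => (F.source s).trans (F.target s).symm⟩

theorem ContinuousMap.Homotopic.freelyHomotopicLoops {f₀ f₁ : C(X, Y)} (h : f₀.Homotopic f₁)
    {x : X} (γ : Path x x) : FreelyHomotopicLoops (fun t => f₀ (γ t)) (fun t => f₁ (γ t)) := by
  obtain ⟨F⟩ := h
  exact ⟨fun p => F (p.1, γ p.2), by fun_prop, fun t => F.apply_zero _, fun t => F.apply_one _,
    fun s => by simp⟩

theorem Path.freelyHomotopicLoops_trans_trans_symm {x y : Y} (γ : Path x y) (q : Path y y) :
    FreelyHomotopicLoops ((γ.trans q).trans γ.symm) q := by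
  -- conjugate by the tail `γ|[s, 1]`, which shrinks to a constant path as `s` goes to `1`
  let τ : ∀ s : I, Path (γ.extend (min s 1)) (γ.extend 1) := fun s => γ.truncate s 1
  have hτ : Continuous ↿τ := γ.truncate_continuous_family.comp
    (by fun_prop : Continuous fun p : I × I => ((p.1 : ℝ), (1 : ℝ), p.2))
  let q' := q.cast γ.extend_one γ.extend_one
  have hfam := FreelyHomotopicLoops.of_continuous_family
    (fun s => ((τ s).trans q').trans (τ s).symm)
    (Path.trans_continuous_family _ (Path.trans_continuous_family _ hτ _
      (q'.continuous.comp continuous_snd)) _ (Path.symm_continuous_family _ hτ))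
  have h0 : ⇑(((τ 0).trans q').trans (τ 0).symm) = ⇑((γ.trans q).trans γ.symm) := by
    ext t; simp [τ, q', Path.trans_apply]
  have h1 : ⇑(((τ 1).trans q').trans (τ 1).symm) =
      ⇑(((Path.refl y).trans q).trans (.refl y)) := by
    ext t; simp [τ, q', Path.trans_apply]
  rw [h0, h1] at hfam
  exact hfam.trans
    ((Path.Homotopic.trans_refl _).trans (Path.Homotopic.refl_trans q)).freelyHomotopicLoops

theorem freelyHomotopicLoops_of_homotopic_trans {x y : Y} {p : Path x x} {q : Path y y}
    (γ : Path x y) (h : (p.trans γ).Homotopic (γ.trans q)) : FreelyHomotopicLoops p q := by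
  have hconj : p.Homotopic ((γ.trans q).trans γ.symm) := by
    rw [← Path.Homotopic.Quotient.eq] at h ⊢
    simp only [Path.Homotopic.Quotient.mk_trans, Path.Homotopic.Quotient.mk_symm] at h ⊢
    rw [← h]
    simp
  exact hconj.freelyHomotopicLoops.trans (γ.freelyHomotopicLoops_trans_trans_symm q)

end FreeHomotopy

section LocallySimplyConnected

variable {Y : Type*} [TopologicalSpace Y]

theorem IsSimplyConnected.homotopic_of_range_subset {U : Set Y} (hU : IsSimplyConnected U)
    {x y : Y} {p q : Path x y} (hp : range p ⊆ U) (hq : range q ⊆ U) : p.Homotopic q := by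
  have := hU.simplyConnectedSpace
  let lift (r : Path x y) (hr : range r ⊆ U) :
      Path (⟨x, hp p.source_mem_range⟩ : U) ⟨y, hp p.target_mem_range⟩ :=
    ⟨⟨fun t => ⟨r t, hr (mem_range_self t)⟩, by fun_prop⟩, by simp, by simp⟩
  exact (SimplyConnectedSpace.paths_homotopic (lift p hp) (lift q hq)).map
    ⟨Subtype.val, continuous_subtype_val⟩

theorem ChartedSpace.exists_isOpen_isSimplyConnected {E : Type*} [NormedAddCommGroup E]
    [NormedSpace ℝ E] [ChartedSpace E Y] (y : Y) :
    ∃ U, IsOpen U ∧ y ∈ U ∧ IsSimplyConnected U := by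
  set e := chartAt E y
  obtain ⟨r, hr, hball⟩ := Metric.isOpen_iff.1 e.open_target (e y) (mem_chart_target E y)
  refine ⟨e.source ∩ e ⁻¹' ball (e y) r, e.isOpen_inter_preimage isOpen_ball,
    ⟨mem_chart_source E y, mem_ball_self hr⟩, ?_⟩
  have hB : IsSimplyConnected (ball (e y) r) := by
    have := contractibleSpace_ball (x := e y) hr
    exact SimplyConnectedSpace.ofContractible _
  rw [← e.symm_image_eq_source_inter_preimage hball, ← inter_eq_left.2 hball,
    ← image_domRestrict]
  refine e.symm.isOpenEmbedding_restrict.isEmbedding.isSimplyConnected_image.2 ?_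
  refine IsEmbedding.subtypeVal.isSimplyConnected_image.1 ?_
  simpa [inter_eq_right.2 hball] using hB

end LocallySimplyConnected

section Uniform

variable {Y : Type*} [PseudoMetricSpace Y] {S : Set Y}

theorem IsCompact.exists_pos_forall_ball_subset_isSimplyConnected (hS : IsCompact S)
    (h : ∀ y : Y, ∃ U, IsOpen U ∧ y ∈ U ∧ IsSimplyConnected U) :
    ∃ ε > 0, ∀ z ∈ S, ∃ U, IsSimplyConnected U ∧ ball z ε ⊆ U := by
  choose U hUo hyU hU using h
  obtain ⟨ε, hε, hcover⟩ := lebesgue_number_lemma_of_metric hS hUo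
    (fun z _ => mem_iUnion.2 ⟨z, hyU z⟩)
  refine ⟨ε, hε, fun z hz => ?_⟩
  obtain ⟨y, hy⟩ := hcover z hz
  exact ⟨U y, hU y, hy⟩

theorem IsCompact.exists_pos_forall_joinedIn_ball [LocallyPathConnectedSpace Y]
    (hS : IsCompact S) {ε : ℝ} (hε : 0 < ε) :
    ∃ η > 0, ∀ z ∈ S, ∀ w ∈ ball z η, JoinedIn (ball z ε) w z := by
  obtain ⟨η, hη, hcover⟩ := lebesgue_number_lemma_of_metric hS
    (fun y => (isOpen_ball (x := y) (ε := ε / 2)).pathComponentIn y)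
    (fun z _ => mem_iUnion.2 ⟨z, mem_pathComponentIn_self (mem_ball_self (half_pos hε))⟩)
  refine ⟨η, hη, fun z hz w hw => ?_⟩
  obtain ⟨y, hy⟩ := hcover z hz
  have hzy : JoinedIn (ball y (ε / 2)) y z := hy (mem_ball_self hη)
  refine ((hy hw).symm.trans hzy).mono (ball_subset_ball' ?_)
  linarith [mem_ball'.1 hzy.target_mem]

end Uniform

section Squares

variable {Y : Type*} [PseudoMetricSpace Y] {a c : ℝ → Y} (ha : Continuous a) (hc : Continuous c)

/-- Loops enter through `Path.extend`, so that their sub-paths are images of `Path.segment u v`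
in the simply connected line `ℝ`. -/
def SquaresCommute (ρ u v : ℝ) : Prop :=
  ∀ (τu : Path (a u) (c u)) (τv : Path (a v) (c v)), range τu ⊆ ball (c u) ρ →
    range τv ⊆ ball (c v) ρ →
      (((Path.segment u v).map ha).trans τv).Homotopic (τu.trans ((Path.segment u v).map hc))

variable {ha hc}

theorem squaresCommute_of_subset {U : Set Y} (hU : IsSimplyConnected U) {ρ u v : ℝ}
    (hsub : a '' segment ℝ u v ∪ c '' segment ℝ u v ∪ ball (c u) ρ ∪ ball (c v) ρ ⊆ U) :
    SquaresCommute ha hc ρ u v := by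
  intro τu τv hτu hτv
  simp only [union_subset_iff] at hsub
  apply hU.homotopic_of_range_subset <;>
    simp only [Path.trans_range, Path.map_coe, range_comp, Path.range_segment, union_subset_iff]
  exacts [⟨hsub.1.1.1, hτv.trans hsub.2⟩, ⟨hτu.trans hsub.1.2, hsub.1.1.2⟩]

theorem SquaresCommute.trans {ρ u v w : ℝ} (huv : SquaresCommute ha hc ρ u v)
    (hvw : SquaresCommute ha hc ρ v w) (hv : JoinedIn (ball (c v) ρ) (a v) (c v)) :
    SquaresCommute ha hc ρ u w := by
  intro τu τw hτu hτw
  have hτv : range hv.somePath ⊆ ball (c v) ρ := range_subset_iff.2 hv.somePath_mem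
  have hseg : ((Path.segment u v).trans (Path.segment v w)).Homotopic (Path.segment u w) :=
    SimplyConnectedSpace.paths_homotopic _ _
  have hA := hseg.map ⟨a, ha⟩
  have hC := hseg.map ⟨c, hc⟩
  have h₁ := huv τu hv.somePath hτu hτv
  have h₂ := hvw hv.somePath τw hτv hτw
  rw [← Path.Homotopic.Quotient.eq] at hA hC h₁ h₂ ⊢
  simp only [Path.map_trans, Path.Homotopic.Quotient.mk_trans] at hA hC h₁ h₂ ⊢
  rw [← hA, ← hC, Path.Homotopic.Quotient.trans_assoc, h₂,
    ← Path.Homotopic.Quotient.trans_assoc, h₁, Path.Homotopic.Quotient.trans_assoc]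

theorem eventually_squaresCommute {S : Set Y} {ρ : ℝ}
    (hS : ∀ z ∈ S, ∃ U, IsSimplyConnected U ∧ ball z (2 * ρ) ⊆ U) (hcS : ∀ t, c t ∈ S)
    (hjoin : ∀ t, JoinedIn (ball (c t) ρ) (a t) (c t)) (u : ℝ) :
    ∀ᶠ v in 𝓝 u, SquaresCommute ha hc ρ u v ∧ SquaresCommute ha hc ρ v u := by
  obtain ⟨U, hU, hball⟩ := hS (c u) (hcS u)
  have hρ : 0 < ρ := pos_of_mem_ball (hjoin u).target_mem
  obtain ⟨δ, hδ, hcδ⟩ := Metric.continuousAt_iff.1 hc.continuousAt ρ hρ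
  filter_upwards [ball_mem_nhds u hδ] with v hv
  have hnear : ∀ w ∈ segment ℝ u v, dist (c w) (c u) < ρ := fun w hw =>
    hcδ ((convex_ball u δ).segment_subset (mem_ball_self hδ) hv hw)
  have hsub : a '' segment ℝ u v ∪ c '' segment ℝ u v ∪ ball (c u) ρ ∪ ball (c v) ρ ⊆ U := by
    refine subset_trans ?_ hball
    simp only [union_subset_iff, image_subset_iff]
    refine ⟨⟨⟨fun w hw => ?_, fun w hw => ?_⟩, ball_subset_ball (by linarith)⟩,
      ball_subset_ball' ?_⟩
    · have := mem_ball.1 (hjoin w).source_mem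
      have := hnear w hw
      rw [mem_preimage, mem_ball]
      linarith [dist_triangle (a w) (c w) (c u)]
    · rw [mem_preimage, mem_ball]
      linarith [hnear w hw]
    · linarith [hnear v (right_mem_segment ℝ u v)]
  refine ⟨squaresCommute_of_subset hU hsub, squaresCommute_of_subset hU ?_⟩
  rwa [segment_symm, union_right_comm _ (ball (c v) ρ)]

theorem squaresCommute_of_forall_joinedIn {S : Set Y} {ρ : ℝ}
    (hS : ∀ z ∈ S, ∃ U, IsSimplyConnected U ∧ ball z (2 * ρ) ⊆ U) (hcS : ∀ t, c t ∈ S)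
    (hjoin : ∀ t, JoinedIn (ball (c t) ρ) (a t) (c t)) (u v : ℝ) :
    SquaresCommute ha hc ρ u v :=
  PreconnectedSpace.induction₂' _ (eventually_squaresCommute hS hcS hjoin)
    ⟨fun _ v _ huv hvw => huv.trans hvw (hjoin v)⟩ u v

end Squares

theorem Path.homotopic_trans_of_forall_joinedIn {Y : Type*} [PseudoMetricSpace Y] {S : Set Y}
    {ρ : ℝ} (hS : ∀ z ∈ S, ∃ U, IsSimplyConnected U ∧ ball z (2 * ρ) ⊆ U)
    {x₀ x₁ y₀ y₁ : Y} {p : Path x₀ x₁} {q : Path y₀ y₁} (hqS : ∀ t, q t ∈ S)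
    (hjoin : ∀ t, JoinedIn (ball (q t) ρ) (p t) (q t)) {σ₀ : Path x₀ y₀} {σ₁ : Path x₁ y₁}
    (hσ₀ : range σ₀ ⊆ ball y₀ ρ) (hσ₁ : range σ₁ ⊆ ball y₁ ρ) :
    (p.trans σ₁).Homotopic (σ₀.trans q) := by
  have h := squaresCommute_of_forall_joinedIn (ha := p.continuous_extend)
    (hc := q.continuous_extend) hS (fun _ => hqS _) (fun _ => hjoin _) 0 1
    (σ₀.cast p.extend_zero q.extend_zero) (σ₁.cast p.extend_one q.extend_one)
    (by simpa using hσ₀) (by simpa using hσ₁)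
  have hp : (Path.segment (0 : ℝ) 1).map p.continuous_extend =
      p.cast p.extend_zero p.extend_one := by
    ext; simp [AffineMap.lineMap_apply_ring']
  have hq : (Path.segment (0 : ℝ) 1).map q.continuous_extend =
      q.cast q.extend_zero q.extend_one := by
    ext; simp [AffineMap.lineMap_apply_ring']
  rw [hp, hq, ← Path.cast_trans, ← Path.cast_trans] at h
  exact h.pathCast p.extend_zero.symm q.extend_one.symm

theorem IsCompact.exists_pos_forall_freelyHomotopicLoops {E Y : Type*} [NormedAddCommGroup E]
    [NormedSpace ℝ E] [PseudoMetricSpace Y] [ChartedSpace E Y] {S : Set Y} (hS : IsCompact S) :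
    ∃ η > 0, ∀ {x y : Y} (p : Path x x) (q : Path y y), (∀ t, q t ∈ S) →
      (∀ t, dist (p t) (q t) < η) → FreelyHomotopicLoops p q := by
  have := ChartedSpace.locallyPathConnectedSpace (H := E) (M := Y)
  obtain ⟨ε, hε, hSε⟩ := hS.exists_pos_forall_ball_subset_isSimplyConnected
    (ChartedSpace.exists_isOpen_isSimplyConnected (E := E))
  obtain ⟨η, hη, hjoin⟩ := hS.exists_pos_forall_joinedIn_ball (half_pos hε)
  refine ⟨η, hη, fun {x y} p q hqS hpq => ?_⟩
  obtain ⟨γ, hγ⟩ := hjoin y (q.source ▸ hqS 0) x (by simpa using hpq 0)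
  have hγ' : range γ ⊆ ball y (ε / 2) := range_subset_iff.2 hγ
  exact freelyHomotopicLoops_of_homotopic_trans γ
    (Path.homotopic_trans_of_forall_joinedIn (by simpa [mul_div_cancel₀] using hSε) hqS
      (fun t => hjoin _ (hqS t) _ (hpq t)) hγ' hγ')

theorem eventually_inducedHom_eq_of_tendstoUniformlyOn_general {d' : ℕ}
    {X : Type*} [TopologicalSpace X]
    {Y : Type*} [MetricSpace Y] [ChartedSpace (EuclideanSpace ℝ (Fin d')) Y]
    (K : Set X) (hKcpt : IsCompact K)
    (hKretr : ∃ r : C(X, X), (∀ x, r x ∈ K) ∧ (∀ x ∈ K, r x = x) ∧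
      (ContinuousMap.id X).Homotopic r)
    (f : ℕ → X → Y) (hf : ∀ k, Continuous (f k))
    (g : X → Y) (hg : Continuous g)
    (hconv : TendstoUniformlyOn f g atTop K)
    (x₀ : X) :
    ∀ᶠ k in atTop, ∀ γ : Path x₀ x₀,
      FreelyHomotopicLoops (fun t => f k (γ t)) (fun t => g (γ t)) := by
  obtain ⟨r, hrK, -, hr⟩ := hKretr
  obtain ⟨η, hη, hloops⟩ := (hKcpt.image hg).exists_pos_forall_freelyHomotopicLoops
    (E := EuclideanSpace ℝ (Fin d'))
  filter_upwards [Metric.tendstoUniformlyOn_iff.1 hconv η hη] with k hk γ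
  have hfr := (ContinuousMap.Homotopic.refl ⟨f k, hf k⟩).comp hr |>.freelyHomotopicLoops γ
  have hgr := (ContinuousMap.Homotopic.refl ⟨g, hg⟩).comp hr.symm |>.freelyHomotopicLoops γ
  have hnear := hloops (γ.map ((hf k).comp r.continuous)) (γ.map (hg.comp r.continuous))
    (fun t => mem_image_of_mem g (hrK _)) (fun t => (dist_comm _ _).trans_lt (hk _ (hrK _)))
  exact hfr.trans (hnear.trans hgr)

/-- Let `X` be a topological manifold, `K ⊆ X` a compact connected deformation retract of
`X`, and `(f_k)` a sequence of continuous maps to a (metrizable) manifold `Y` converging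
uniformly on `K` to `f`. Then for all large `k` the maps `f_k` and `f` induce the same
homomorphism on `π₁(X, x₀)` for `x₀ ∈ K`: every loop at `x₀` has freely homotopic images
under `f_k` and `f`. -/
theorem eventually_inducedHom_eq_of_tendstoUniformlyOn {d d' : ℕ}
    {X : Type*} [TopologicalSpace X] [T2Space X]
    [ChartedSpace (EuclideanSpace ℝ (Fin d)) X]
    {Y : Type*} [MetricSpace Y] [ChartedSpace (EuclideanSpace ℝ (Fin d')) Y]
    (K : Set X) (hKcpt : IsCompact K) (hKconn : IsConnected K)
    (hKretr : ∃ r : C(X, X), (∀ x, r x ∈ K) ∧ (∀ x ∈ K, r x = x) ∧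
      (ContinuousMap.id X).Homotopic r)
    (f : ℕ → X → Y) (hf : ∀ k, Continuous (f k))
    (g : X → Y) (hg : Continuous g)
    (hconv : TendstoUniformlyOn f g atTop K)
    (x₀ : X) (hx₀ : x₀ ∈ K) :
    ∀ᶠ k in atTop, ∀ γ : Path x₀ x₀,
      FreelyHomotopicLoops (fun t => f k (γ t)) (fun t => g (γ t)) :=
  eventually_inducedHom_eq_of_tendstoUniformlyOn_general (d' := d') K hKcpt hKretr f hf g hg hconv
    x₀
end

section
/- Let X, Y be complex manifolds such that Y is taut and such that any holomorphic maps f_k : X → Y that all induce the same homomorphism π₁(X) → π₁(Y) and are each dominant all coincide. Suppose moreover that no sequence in O_dom(X, Y) is compactly divergent and that π₁(X) is finitely generated with generators represented by loops in a fixed compact connected set K ⊆ X. Then O_dom(X, Y) is finite. -/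
open Filter unitInterval
open scoped Manifold

/-- A holomorphic map is dominant if its image has nonempty interior. -/
def IsDominantMap {X Y : Type*} [TopologicalSpace Y] (f : X → Y) : Prop :=
  (interior (Set.range f)).Nonempty

/-- The complex manifold `Y` (metrizable, modelled on `E'`) is taut: for every complex
manifold `M`, every sequence of holomorphic maps `M → Y` admits a subsequence converging
uniformly on compact sets to a holomorphic map, or a compactly divergent subsequence. -/
def IsTautManifold (E' : Type*) [NormedAddCommGroup E'] [NormedSpace ℂ E']
    (Y : Type*) [MetricSpace Y] [ChartedSpace E' Y] : Prop :=
  ∀ (E : Type) (_ : NormedAddCommGroup E) (_ : NormedSpace ℂ E)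
    (M : Type) (_ : TopologicalSpace M) (_ : ChartedSpace E M),
    ∀ f : ℕ → M → Y, (∀ ν, MDifferentiable 𝓘(ℂ, E) 𝓘(ℂ, E') (f ν)) →
      ∃ φ : ℕ → ℕ, StrictMono φ ∧
        ((∃ g : M → Y, MDifferentiable 𝓘(ℂ, E) 𝓘(ℂ, E') g ∧
            ∀ K : Set M, IsCompact K → TendstoUniformlyOn (fun ν => f (φ ν)) g atTop K) ∨
          (∀ K : Set M, IsCompact K → ∀ L : Set Y, IsCompact L →
            ∀ᶠ ν in atTop, f (φ ν) '' K ∩ L = ∅))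


/-! ### Auxiliary machinery -/

attribute [local instance] Path.Homotopic.setoid


namespace FinAux

variable {Y : Type*} [TopologicalSpace Y]

lemma freely_continuous_left {a b : I → Y} (h : FreelyHomotopicLoops a b) : Continuous a := by
  obtain ⟨H, hc, h0, h1, hl⟩ := h
  have : a = fun t => H (0, t) := by funext t; rw [h0]
  rw [this]
  exact hc.comp (by continuity)

lemma freely_continuous_right {a b : I → Y} (h : FreelyHomotopicLoops a b) : Continuous b := by
  obtain ⟨H, hc, h0, h1, hl⟩ := h
  have : b = fun t => H (1, t) := by funext t; rw [h1]
  rw [this]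
  exact hc.comp (by continuity)

lemma freely_symm {a b : I → Y} (h : FreelyHomotopicLoops a b) : FreelyHomotopicLoops b a := by
  obtain ⟨H, hc, h0, h1, hl⟩ := h
  exact ⟨fun st => H (unitInterval.symm st.1, st.2),
    hc.comp (by continuity),
    fun t => by simpa using h1 t,
    fun t => by simpa using h0 t,
    fun s => hl _⟩

lemma freely_trans {a b c : I → Y} (hab : FreelyHomotopicLoops a b)
    (hbc : FreelyHomotopicLoops b c) : FreelyHomotopicLoops a c := by
  have ha := freely_continuous_left hab
  have hb := freely_continuous_right hab
  have hc := freely_continuous_right hbc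
  obtain ⟨H, Hc, H0, H1, Hl⟩ := hab
  obtain ⟨G, Gc, G0, G1, Gl⟩ := hbc
  let F1 : ContinuousMap.Homotopy ⟨a, ha⟩ ⟨b, hb⟩ :=
    { toContinuousMap := ⟨H, Hc⟩
      map_zero_left := H0
      map_one_left := H1 }
  let F2 : ContinuousMap.Homotopy ⟨b, hb⟩ ⟨c, hc⟩ :=
    { toContinuousMap := ⟨G, Gc⟩
      map_zero_left := G0
      map_one_left := G1 }
  refine ⟨fun st => (F1.trans F2) st, (F1.trans F2).continuous,
    fun t => (F1.trans F2).apply_zero t, fun t => (F1.trans F2).apply_one t, fun s => ?_⟩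
  show (F1.trans F2) (s, 0) = (F1.trans F2) (s, 1)
  rw [ContinuousMap.Homotopy.trans_apply, ContinuousMap.Homotopy.trans_apply]
  split_ifs with h
  · exact Hl _
  · exact Gl _

/-- two "reparametrizations by extend" of the same loop are freely homotopic -/
lemma freely_pext {z : Y} (p : Path z z) (θ₀ θ₁ : I → ℝ) (hθ₀ : Continuous θ₀)
    (hθ₁ : Continuous θ₁) (h00 : θ₀ 0 = 0) (h01 : θ₀ 1 = 1) (h10 : θ₁ 0 = 0) (h11 : θ₁ 1 = 1)
    (a b : I → Y) (ha : ∀ t, a t = p.extend (θ₀ t)) (hb : ∀ t, b t = p.extend (θ₁ t)) :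
    FreelyHomotopicLoops a b := by
  refine ⟨fun st => p.extend ((1 - (st.1 : ℝ)) * θ₀ st.2 + (st.1 : ℝ) * θ₁ st.2),
    p.continuous_extend.comp (by continuity), fun t => ?_, fun t => ?_, fun s => ?_⟩
  · simp [ha t]
  · simp [hb t]
  · simp [h00, h01, h10, h11]

lemma freely_of_homotopic {z : Y} {p q : Path z z} (h : p.Homotopic q) :
    FreelyHomotopicLoops ⇑p ⇑q := by
  obtain ⟨F⟩ := h
  refine ⟨fun st => F st, F.continuous, fun t => F.apply_zero t, fun t => F.apply_one t,
    fun s => ?_⟩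
  have h0 : F (s, 0) = p 0 := F.eq_fst s (by norm_num)
  have h1 : F (s, 1) = p 1 := F.eq_fst s (by norm_num)
  show F (s, 0) = F (s, 1)
  rw [h0, h1, Path.source, Path.target]

end FinAux

namespace FinAux
variable {Y : Type*} [TopologicalSpace Y]

set_option maxHeartbeats 1000000 in
lemma freely_conj {z w : Y} (τ : Path z w) (B : Path w w) :
    FreelyHomotopicLoops ⇑(τ.trans (B.trans τ.symm)) ⇑B := by
  set P : Path z z := τ.trans (B.trans τ.symm) with hP
  set H : I × I → Y := fun st =>
    if (st.2 : ℝ) ≤ 1/4 then τ.extend (st.1 + 4*st.2*(1-st.1))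
    else if (st.2 : ℝ) ≤ 3/4 then B.extend (2*st.2 - 1/2)
    else τ.extend (1 - (4*st.2-3)*(1-st.1)) with hH
  have hcont : Continuous H := by
    rw [hH]
    apply Continuous.if_le
    · exact τ.continuous_extend.comp (by fun_prop)
    · apply Continuous.if_le
      · exact B.continuous_extend.comp (by fun_prop)
      · exact τ.continuous_extend.comp (by fun_prop)
      · fun_prop
      · exact continuous_const
      · intro st h
        rw [h]
        norm_num
    · fun_prop
    · exact continuous_const
    · intro st h
      rw [h]
      norm_num
  have hloop : ∀ s : I, H (s, 0) = H (s, 1) := by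
    intro s
    rw [hH]
    norm_num
  have mid : FreelyHomotopicLoops (fun t => H (0, t)) (fun t => H (1, t)) :=
    ⟨H, hcont, fun t => rfl, fun t => rfl, hloop⟩
  set φ : I → ℝ := fun t =>
    if (t : ℝ) ≤ 1/4 then 2*t else if (t : ℝ) ≤ 3/4 then t/2 + 3/8 else (t : ℝ) with hφ
  have hφc : Continuous φ := by
    rw [hφ]
    apply Continuous.if_le
    · fun_prop
    · apply Continuous.if_le
      · fun_prop
      · fun_prop
      · fun_prop
      · exact continuous_const
      · intro t h; rw [h]; norm_num
    · fun_prop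
    · exact continuous_const
    · intro t h; rw [h]; norm_num
  have link1 : FreelyHomotopicLoops ⇑P (fun t => H (0, t)) := by
    apply freely_pext P (fun t => (t : ℝ)) φ (by fun_prop) hφc (by norm_num) (by norm_num)
      (by rw [hφ]; norm_num) (by rw [hφ]; norm_num)
    · intro t
      rw [Path.extend_apply P t.2]
    · intro t
      rw [hH, hφ]
      simp only
      split_ifs with h1 h2
      · -- t ≤ 1/4
        have m1 : (2*(t:ℝ)) ∈ Set.Icc (0:ℝ) 1 := by
          constructor <;> nlinarith [t.2.1, t.2.2]
        rw [Path.extend_apply P m1, hP, Path.trans_apply]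
        have hc : ((⟨2*(t:ℝ), m1⟩ : I) : ℝ) ≤ 1/2 := by simp; linarith
        rw [dif_pos hc]
        have mL : ((0:I):ℝ) + 4*(t:ℝ)*(1-((0:I):ℝ)) ∈ Set.Icc (0:ℝ) 1 := by
          norm_num; constructor <;> nlinarith [t.2.1, t.2.2]
        rw [Path.extend_apply τ mL]
        congr 1
        apply Subtype.ext
        simp; ring
      · -- 1/4 < t ≤ 3/4
        have m1 : ((t:ℝ)/2 + 3/8) ∈ Set.Icc (0:ℝ) 1 := by
          constructor <;> nlinarith [t.2.1, t.2.2]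
        rw [Path.extend_apply P m1, hP, Path.trans_apply]
        have hc : ¬ ((⟨(t:ℝ)/2 + 3/8, m1⟩ : I) : ℝ) ≤ 1/2 := by simp; linarith
        rw [dif_neg hc, Path.trans_apply]
        have mL : (2*(t:ℝ) - 1/2) ∈ Set.Icc (0:ℝ) 1 := by
          constructor <;> nlinarith [t.2.1, t.2.2]
        split_ifs with hc2
        · rw [Path.extend_apply B mL]
          congr 1
          apply Subtype.ext
          simp; ring
        · exfalso
          simp at hc2
          linarith
      · -- t > 3/4
        have m1 : (t:ℝ) ∈ Set.Icc (0:ℝ) 1 := ⟨t.2.1, t.2.2⟩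
        rw [Path.extend_apply P m1, hP, Path.trans_apply]
        have hc : ¬ ((⟨(t:ℝ), m1⟩ : I) : ℝ) ≤ 1/2 := by simp; linarith
        rw [dif_neg hc, Path.trans_apply]
        have mL : (1 - (4*(t:ℝ)-3)*(1-((0:I):ℝ))) ∈ Set.Icc (0:ℝ) 1 := by
          norm_num; constructor <;> nlinarith [t.2.1, t.2.2]
        split_ifs with hc2
        · exfalso
          simp at hc2
          linarith
        · rw [Path.symm_apply, Path.extend_apply τ mL]
          congr 1
          apply Subtype.ext
          simp [unitInterval.symm]; ring
  set ψ : I → ℝ := fun t =>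
    if (t : ℝ) ≤ 1/4 then 0 else if (t : ℝ) ≤ 3/4 then 2*t - 1/2 else 1 with hψ
  have hψc : Continuous ψ := by
    rw [hψ]
    apply Continuous.if_le
    · exact continuous_const
    · apply Continuous.if_le
      · fun_prop
      · exact continuous_const
      · fun_prop
      · exact continuous_const
      · intro t h; rw [h]; norm_num
    · fun_prop
    · exact continuous_const
    · intro t h; rw [h]; norm_num
  have link3 : FreelyHomotopicLoops (fun t => H (1, t)) ⇑B := by
    apply freely_pext B ψ (fun t => (t : ℝ)) hψc (by fun_prop)
      (by rw [hψ]; norm_num) (by rw [hψ]; norm_num) (by norm_num) (by norm_num)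
    · intro t
      rw [hH, hψ]
      simp only
      split_ifs with h1 h2
      · rw [show ((1:I):ℝ) + 4*(t:ℝ)*(1-((1:I):ℝ)) = 1 by norm_num, τ.extend_one, B.extend_zero]
      · rfl
      · rw [show (1:ℝ) - (4*(t:ℝ)-3)*(1-((1:I):ℝ)) = 1 by norm_num, τ.extend_one, B.extend_one]
    · intro t
      rw [Path.extend_apply B t.2]
  exact freely_trans (freely_trans link1 mid) link3

end FinAux

open Filter unitInterval Metric

namespace FinAux

variable (E' : Type*) [NormedAddCommGroup E'] [NormedSpace ℂ E']
variable {Y : Type*} [MetricSpace Y]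

/-- local path connectivity at arbitrarily small scales, via charts -/
lemma chart_path [ChartedSpace E' Y] (y : Y) {e : ℝ} (he : 0 < e) :
    ∃ ρ > 0, ρ ≤ e ∧ ∀ x x' : Y, dist x y < ρ → dist x' y < ρ →
      ∃ β : Path x x', Set.range ⇑β ⊆ ball y e := by
  set ψ := chartAt E' y with hψ
  have hy : y ∈ ψ.source := mem_chart_source E' y
  have hyt : ψ y ∈ ψ.target := ψ.map_source hy
  obtain ⟨s₁, hs₁pos, hs₁⟩ := Metric.isOpen_iff.mp ψ.open_target _ hyt
  have hsc : ContinuousAt ψ.symm (ψ y) := ψ.symm.continuousAt (by rw [ψ.symm_source]; exact hyt)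
  obtain ⟨s₂', hs₂'pos, hs₂'⟩ := Metric.continuousAt_iff.mp hsc e he
  set s₂ := min s₂' s₁ with hs₂def
  have hs₂pos : 0 < s₂ := lt_min hs₂'pos hs₁pos
  have hfc : ContinuousAt ψ y := ψ.continuousAt hy
  obtain ⟨ρ₁, hρ₁pos, hρ₁⟩ := Metric.continuousAt_iff.mp hfc s₂ hs₂pos
  obtain ⟨ρ₂, hρ₂pos, hρ₂⟩ := Metric.isOpen_iff.mp ψ.open_source y hy
  refine ⟨min (min ρ₁ ρ₂) e, by positivity, min_le_right _ _, fun x x' hx hx' => ?_⟩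
  have hxs : x ∈ ψ.source :=
    hρ₂ (mem_ball.mpr (lt_of_lt_of_le hx (le_trans (min_le_left _ _) (min_le_right _ _))))
  have hx's : x' ∈ ψ.source :=
    hρ₂ (mem_ball.mpr (lt_of_lt_of_le hx' (le_trans (min_le_left _ _) (min_le_right _ _))))
  have hbx : ψ x ∈ ball (ψ y) s₂ :=
    mem_ball.mpr (hρ₁ (lt_of_lt_of_le hx (le_trans (min_le_left _ _) (min_le_left _ _))))
  have hbx' : ψ x' ∈ ball (ψ y) s₂ :=
    mem_ball.mpr (hρ₁ (lt_of_lt_of_le hx' (le_trans (min_le_left _ _) (min_le_left _ _))))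
  have hcombo : ∀ t : I, (1 - (t:ℝ)) • ψ x + (t:ℝ) • ψ x' ∈ ball (ψ y) s₂ := by
    intro t
    exact (convex_ball (ψ y) s₂) hbx hbx' (by linarith [t.2.2]) t.2.1 (by ring)
  have hout : ∀ u, u ∈ ball (ψ y) s₂ → ψ.symm u ∈ ball y e := by
    intro u hu
    have := hs₂' (show dist u (ψ y) < s₂' from lt_of_lt_of_le (mem_ball.mp hu) (min_le_left _ _))
    rw [ψ.left_inv hy] at this
    exact mem_ball.mpr this
  have hmemsrc : ∀ u, u ∈ ball (ψ y) s₂ → u ∈ ψ.target := fun u hu =>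
    hs₁ (mem_ball.mpr (lt_of_lt_of_le (mem_ball.mp hu) (min_le_right _ _)))
  refine ⟨{ toFun := fun t => ψ.symm ((1 - (t:ℝ)) • ψ x + (t:ℝ) • ψ x')
            continuous_toFun := ψ.continuousOn_symm.comp_continuous (by fun_prop)
              (fun t => hmemsrc _ (hcombo t))
            source' := by simp [ψ.left_inv hxs]
            target' := by simp [ψ.left_inv hx's] }, ?_⟩
  rintro u ⟨t, rfl⟩
  exact hout _ (hcombo t)

/-- at small scales, paths within a chart ball are homotopic rel endpoints -/
lemma chart_homotopic [ChartedSpace E' Y] (y : Y) :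
    ∃ e₀ > 0, ∀ (x x' : Y) (p q : Path x x'),
      Set.range ⇑p ⊆ ball y e₀ → Set.range ⇑q ⊆ ball y e₀ → p.Homotopic q := by
  set ψ := chartAt E' y with hψ
  have hy : y ∈ ψ.source := mem_chart_source E' y
  have hyt : ψ y ∈ ψ.target := ψ.map_source hy
  obtain ⟨s₁, hs₁pos, hs₁⟩ := Metric.isOpen_iff.mp ψ.open_target _ hyt
  have hfc : ContinuousAt ψ y := ψ.continuousAt hy
  obtain ⟨ρ₁, hρ₁pos, hρ₁⟩ := Metric.continuousAt_iff.mp hfc s₁ hs₁pos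
  obtain ⟨ρ₂, hρ₂pos, hρ₂⟩ := Metric.isOpen_iff.mp ψ.open_source y hy
  refine ⟨min ρ₁ ρ₂, by positivity, fun x x' p q hp hq => ?_⟩
  have hsrc : ∀ t, p t ∈ ψ.source ∧ q t ∈ ψ.source := fun t =>
    ⟨hρ₂ (mem_ball.mpr (lt_of_lt_of_le (mem_ball.mp (hp ⟨t, rfl⟩)) (min_le_right _ _))),
     hρ₂ (mem_ball.mpr (lt_of_lt_of_le (mem_ball.mp (hq ⟨t, rfl⟩)) (min_le_right _ _)))⟩
  have hball : ∀ t, ψ (p t) ∈ ball (ψ y) s₁ ∧ ψ (q t) ∈ ball (ψ y) s₁ := fun t =>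
    ⟨mem_ball.mpr (hρ₁ (lt_of_lt_of_le (mem_ball.mp (hp ⟨t, rfl⟩)) (min_le_left _ _))),
     mem_ball.mpr (hρ₁ (lt_of_lt_of_le (mem_ball.mp (hq ⟨t, rfl⟩)) (min_le_left _ _)))⟩
  have hcombo : ∀ st : I × I,
      (1 - (st.1:ℝ)) • ψ (p st.2) + (st.1:ℝ) • ψ (q st.2) ∈ ball (ψ y) s₁ := fun st =>
    (convex_ball (ψ y) s₁) (hball st.2).1 (hball st.2).2 (by linarith [st.1.2.2]) st.1.2.1
      (by ring)
  refine ⟨{ toContinuousMap := ⟨fun st => ψ.symm ((1 - (st.1:ℝ)) • ψ (p st.2) + (st.1:ℝ) • ψ (q st.2)),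
              ψ.continuousOn_symm.comp_continuous ?_ (fun st => hs₁ (hcombo st))⟩
            map_zero_left := ?_
            map_one_left := ?_
            prop' := ?_ }⟩
  · have hc1 : Continuous fun st : I × I => ψ (p st.2) :=
      ψ.continuousOn.comp_continuous (p.continuous.comp continuous_snd)
        (fun st => (hsrc st.2).1)
    have hc2 : Continuous fun st : I × I => ψ (q st.2) :=
      ψ.continuousOn.comp_continuous (q.continuous.comp continuous_snd)
        (fun st => (hsrc st.2).2)
    exact ((continuous_const.sub (continuous_subtype_val.comp continuous_fst)).smul hc1).add
      ((continuous_subtype_val.comp continuous_fst).smul hc2)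
  · intro t
    simp [ψ.left_inv (hsrc t).1]
  · intro t
    simp [ψ.left_inv (hsrc t).2]
  · intro s t ht
    simp only [ContinuousMap.coe_mk]
    rcases ht with h | h
    · subst h
      have h0 : q 0 = p 0 := by rw [p.source, q.source]
      rw [h0, show ((1:ℝ) - s) • ψ (p 0) + (s:ℝ) • ψ (p 0) = ψ (p 0) by rw [← add_smul]; ring_nf; exact one_smul _ _]
      simp [ψ.left_inv (show x ∈ ψ.source from p.source ▸ (hsrc 0).1)]
    · simp only [Set.mem_singleton_iff] at h
      subst h
      have h1 : q 1 = p 1 := by rw [p.target, q.target]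
      rw [h1, show ((1:ℝ) - s) • ψ (p 1) + (s:ℝ) • ψ (p 1) = ψ (p 1) by rw [← add_smul]; ring_nf; exact one_smul _ _]
      simp [ψ.left_inv (show x' ∈ ψ.source from p.target ▸ (hsrc 1).1)]

end FinAux

open Filter unitInterval CategoryTheory

namespace FinAux

variable {Y : Type*} [TopologicalSpace Y]

/-- affine subpath of a path, with endpoints given via `extend` -/
noncomputable def subp {x y : Y} (p : Path x y) (u v : ℝ) : Path (p.extend u) (p.extend v) where
  toFun t := p.extend (u + t * (v - u))
  continuous_toFun := p.continuous_extend.comp (by fun_prop)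
  source' := by norm_num
  target' := by norm_num

@[simp] lemma subp_apply {x y : Y} (p : Path x y) (u v : ℝ) (t : I) :
    subp p u v t = p.extend (u + t * (v - u)) := rfl

/-- interpolation of parametrizations: two extend-reparametrizations of the same path with
matching endpoints are homotopic rel endpoints. -/
lemma pext_homotopic {x y z z' : Y} (p : Path x y) (θ₀ θ₁ : I → ℝ) (h₀ : Continuous θ₀)
    (h₁ : Continuous θ₁) (he0 : θ₀ 0 = θ₁ 0) (he1 : θ₀ 1 = θ₁ 1)
    (q₀ q₁ : Path z z') (hq₀ : ∀ t, q₀ t = p.extend (θ₀ t)) (hq₁ : ∀ t, q₁ t = p.extend (θ₁ t)) :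
    q₀.Homotopic q₁ := by
  refine ⟨{ toContinuousMap := ⟨fun st => p.extend ((1 - (st.1:ℝ)) * θ₀ st.2 + (st.1:ℝ) * θ₁ st.2),
              p.continuous_extend.comp (by fun_prop)⟩
            map_zero_left := ?_
            map_one_left := ?_
            prop' := ?_ }⟩
  · intro t; simp [hq₀ t]
  · intro t; simp [hq₁ t]
  · intro s t ht
    simp only [ContinuousMap.coe_mk]
    rcases ht with h | h
    · subst h
      rw [show (1 - (s:ℝ)) * θ₀ 0 + (s:ℝ) * θ₁ 0 = θ₀ 0 by rw [he0]; ring]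
      exact (hq₀ 0).symm
    · simp only [Set.mem_singleton_iff] at h
      subst h
      rw [show (1 - (s:ℝ)) * θ₀ 1 + (s:ℝ) * θ₁ 1 = θ₀ 1 by rw [he1]; ring]
      exact (hq₀ 1).symm

lemma subp_split {x y : Y} (p : Path x y) (u v w : ℝ) :
    ((subp p u v).trans (subp p v w)).Homotopic (subp p u w) := by
  apply pext_homotopic p
    (θ₀ := fun t => if (t:ℝ) ≤ 1/2 then u + 2*t*(v-u) else v + (2*t-1)*(w-v))
    (θ₁ := fun t => u + t * (w - u))
  · apply Continuous.if_le
    · fun_prop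
    · fun_prop
    · fun_prop
    · exact continuous_const
    · intro t h; rw [h]; ring
  · fun_prop
  · norm_num
  · norm_num
  · intro t
    rw [Path.trans_apply]
    split_ifs with h <;> simp only [subp_apply]
  · intro t
    simp

/-- the morphism in the fundamental groupoid determined by a path -/
noncomputable def homOf {x y : Y} (p : Path x y) :
    FundamentalGroupoid.mk x ⟶ FundamentalGroupoid.mk y := ⟦p⟧

lemma homotopic_of_homOf_eq {x y : Y} {p q : Path x y} (h : homOf p = homOf q) :
    p.Homotopic q :=
  Quotient.exact h

lemma homOf_eq_of_homotopic {x y : Y} {p q : Path x y} (h : p.Homotopic q) :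
    homOf p = homOf q := by
  apply Quotient.sound
  exact h

lemma homOf_trans {x y z : Y} (p : Path x y) (q : Path y z) :
    homOf (p.trans q) = homOf p ≫ homOf q := by
  rw [FundamentalGroupoid.comp_eq]
  rfl

lemma homOf_refl (x : Y) : homOf (Path.refl x) = 𝟙 (FundamentalGroupoid.mk x) := rfl

/-- congruence with eqToHom for (heterogeneously) equal paths -/
lemma hom_of_eq {x y x' y' : Y} (hx : x = x') (hy : y = y') (p : Path x y) (q : Path x' y')
    (h : HEq p q) :
    homOf p = eqToHom (congrArg FundamentalGroupoid.mk hx) ≫ homOf q ≫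
        eqToHom (congrArg FundamentalGroupoid.mk hy.symm) := by
  subst hx
  subst hy
  rw [eq_of_heq h]
  simp

/-- pointwise equal paths with equal endpoints are (heterogeneously) equal -/
lemma path_heq {x y x' y' : Y} (hx : x = x') (hy : y = y') (p : Path x y) (q : Path x' y')
    (h : ∀ t, p t = q t) : HEq p q := by
  subst hx
  subst hy
  exact heq_of_eq (Path.ext (funext h))

end FinAux

namespace FinAux

open Metric CategoryTheory

section Conj

variable {Y : Type*} [TopologicalSpace Y]

lemma extend_def {x y : Y} (p : Path x y) (r : ℝ) :
    p.extend r = p (Set.projIcc 0 1 zero_le_one r) := rfl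

lemma conj_setup (E' : Type*) [NormedAddCommGroup E'] [NormedSpace ℂ E']
    {Y : Type*} [MetricSpace Y] [ChartedSpace E' Y] {L : Set Y} (hL : IsCompact L) (hne : L.Nonempty) :
    ∃ (ε : ℝ) (_ : 0 < ε) (Bc : ∀ z x : Y, z ∈ L → dist x z < ε → Path z x),
      ∀ {xa ya xc yc : Y} (a : Path xa ya) (c : Path xc yc),
        (∀ t, c t ∈ L) → (∀ t, dist (a t) (c t) < ε) →
        ∀ (h1 : xc ∈ L) (h2 : dist xa xc < ε) (h3 : yc ∈ L) (h4 : dist ya yc < ε),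
        ((Bc xc xa h1 h2).trans a).Homotopic (c.trans (Bc yc ya h3 h4)) := by
  classical
  -- homotopy-scale charts
  choose e₀ he₀ hE using fun y : Y => chart_homotopic E' y
  -- cover by quarter balls
  obtain ⟨t1, ht1⟩ := hL.elim_finite_subcover (fun y : L => ball (y : Y) (e₀ y / 4))
    (fun y => isOpen_ball) (fun z hz => Set.mem_iUnion.mpr ⟨⟨z, hz⟩, mem_ball_self (by
      have := he₀ z; positivity)⟩)
  obtain ⟨i0, hi0t, _⟩ := Set.mem_iUnion₂.mp (ht1 hne.choose_spec)
  set ρ : ℝ := t1.inf' ⟨i0, hi0t⟩ (fun i => e₀ i / 4) with hρdef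
  have hρpos : 0 < ρ := by
    rw [hρdef]; refine (Finset.lt_inf'_iff _).2 ?_
    intro i _
    have := he₀ (i : Y); positivity
  have C1 : ∀ z ∈ L, ∃ w : Y, ∀ v : Y, dist v z ≤ ρ → v ∈ ball w (e₀ w) := by
    intro z hz
    obtain ⟨i, hit, hzi⟩ := Set.mem_iUnion₂.mp (ht1 hz)
    refine ⟨(i : Y), fun v hv => ?_⟩
    have hρle : ρ ≤ e₀ i / 4 := Finset.inf'_le _ hit
    have h1 : dist z (i : Y) < e₀ i / 4 := mem_ball.mp hzi
    have h2 : dist v (i : Y) ≤ dist v z + dist z (i : Y) := dist_triangle _ _ _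
    have := he₀ (i : Y)
    exact mem_ball.mpr (by linarith)
  -- bridge-scale charts
  choose ρ' hρ'pos hρ'le hbr using fun y : Y => chart_path E' y (show (0:ℝ) < ρ/4 by positivity)
  obtain ⟨t2, ht2⟩ := hL.elim_finite_subcover (fun y : L => ball (y : Y) (ρ' y / 2))
    (fun y => isOpen_ball) (fun z hz => Set.mem_iUnion.mpr ⟨⟨z, hz⟩, mem_ball_self (by
      have := hρ'pos z; positivity)⟩)
  obtain ⟨j0, hj0t, _⟩ := Set.mem_iUnion₂.mp (ht2 hne.choose_spec)
  set δ : ℝ := t2.inf' ⟨j0, hj0t⟩ (fun i => ρ' i / 2) with hδdef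
  have hδpos : 0 < δ := by
    rw [hδdef]; refine (Finset.lt_inf'_iff _).2 ?_
    intro i _
    have := hρ'pos (i : Y); positivity
  have hδρ : δ ≤ ρ / 8 := by
    have h1 : δ ≤ ρ' j0 / 2 := Finset.inf'_le _ hj0t
    have h2 : ρ' j0 ≤ ρ / 4 := hρ'le _
    linarith
  have BR : ∀ z ∈ L, ∀ x : Y, dist x z < δ → ∃ β : Path z x,
      ∀ v ∈ Set.range ⇑β, dist v z < ρ / 2 := by
    intro z hz x hx
    obtain ⟨i, hit, hzi⟩ := Set.mem_iUnion₂.mp (ht2 hz)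
    have hδle : δ ≤ ρ' i / 2 := Finset.inf'_le _ hit
    have h1 : dist z (i : Y) < ρ' i / 2 := mem_ball.mp hzi
    have h2 : dist x (i : Y) < ρ' i := by
      have := dist_triangle x z (i : Y); linarith
    obtain ⟨β, hβ⟩ := hbr (i : Y) z x (by linarith) h2
    refine ⟨β, fun v hv => ?_⟩
    have h3 : dist v (i : Y) < ρ/4 := mem_ball.mp (hβ hv)
    have h4 : dist v z ≤ dist v (i : Y) + dist (i : Y) z := dist_triangle _ _ _
    rw [dist_comm] at h1
    have h5 : ρ' i ≤ ρ / 4 := hρ'le _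
    linarith
  -- the bridge choice function, at threshold ε := δ/4
  have BR' : ∀ (z x : Y), z ∈ L → dist x z < δ/4 → ∃ β : Path z x,
      ∀ v ∈ Set.range ⇑β, dist v z < ρ / 2 :=
    fun z x hz hx => BR z hz x (by linarith)
  choose Bc hBc using BR'
  refine ⟨δ/4, by positivity, Bc, ?_⟩
  intro xa ya xc yc a c hc hd h1 h2 h3 h4
  -- uniform continuity moduli
  obtain ⟨da, hdapos, hda⟩ := Metric.uniformContinuous_iff.mp
    (CompactSpace.uniformContinuous_of_continuous a.continuous) (ρ/8) (by positivity)
  obtain ⟨dc, hdcpos, hdc⟩ := Metric.uniformContinuous_iff.mp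
    (CompactSpace.uniformContinuous_of_continuous c.continuous) (ρ/8) (by positivity)
  obtain ⟨n, hn⟩ := exists_nat_one_div_lt (show (0:ℝ) < min da dc by positivity)
  set m : ℕ := n + 1 with hmdef
  have hm0 : (0:ℝ) < m := by positivity
  have hosc : ∀ r r' : ℝ, |r - r'| ≤ 1 / m →
      dist (c.extend r) (c.extend r') < ρ/8 ∧ dist (a.extend r) (a.extend r') < ρ/8 := by
    intro r r' hrr
    have hproj : dist (Set.projIcc (0:ℝ) 1 zero_le_one r) (Set.projIcc (0:ℝ) 1 zero_le_one r')
        ≤ dist r r' := by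
      simpa using (LipschitzWith.projIcc (zero_le_one (α := ℝ))).dist_le_mul r r'
    have hmn : (1:ℝ)/m < min da dc := by
      rw [hmdef]
      push_cast
      exact hn
    have hlt : dist (Set.projIcc (0:ℝ) 1 zero_le_one r) (Set.projIcc (0:ℝ) 1 zero_le_one r')
        < min da dc := lt_of_le_of_lt hproj (lt_of_le_of_lt (by rwa [Real.dist_eq]) hmn)
    rw [extend_def, extend_def, extend_def, extend_def]
    exact ⟨hdc (lt_of_lt_of_le hlt (min_le_right _ _)),
      hda (lt_of_lt_of_le hlt (min_le_left _ _))⟩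
  -- nodes
  set ν : ℕ → ℝ := fun k => k / m with hν
  have hmem : ∀ r : ℝ, c.extend r ∈ L := fun r => hc _
  have hdr : ∀ r : ℝ, dist (a.extend r) (c.extend r) < δ/4 := fun r => hd _
  have hν1 : ν m = 1 := by
    rw [hν]
    field_simp
  have hνd : ∀ k : ℕ, ν (k+1) - ν k = 1/m := by
    intro k
    rw [hν]
    push_cast
    field_simp
    ring
  have bheq : ∀ {z z' x x' : Y} (hz : z = z') (hx : x = x') (p1 : z ∈ L) (p2 : dist x z < δ/4)
      (p3 : z' ∈ L) (p4 : dist x' z' < δ/4), HEq (Bc z x p1 p2) (Bc z' x' p3 p4) := by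
    intro z z' x x' hz hx p1 p2 p3 p4
    subst hz; subst hx
    rfl
  -- subpath spread bound
  have hspread : ∀ (k : ℕ) (t : I), |(ν k + (t:ℝ) * (ν (k+1) - ν k)) - ν k| ≤ 1/m := by
    intro k t
    rw [hνd k, add_sub_cancel_left, abs_of_nonneg (mul_nonneg t.2.1 (by positivity))]
    calc (t:ℝ) * (1/m) ≤ 1 * (1/m) := by
          apply mul_le_mul_of_nonneg_right t.2.2 (by positivity)
      _ = 1/m := one_mul _
  -- the cell homotopies
  have cell : ∀ k : ℕ,
      ((Bc (c.extend (ν k)) (a.extend (ν k)) (hmem _) (hdr _)).trans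
          (subp a (ν k) (ν (k+1)))).Homotopic
        ((subp c (ν k) (ν (k+1))).trans
          (Bc (c.extend (ν (k+1))) (a.extend (ν (k+1))) (hmem _) (hdr _))) := by
    intro k
    obtain ⟨w, hw⟩ := C1 (c.extend (ν k)) (hmem _)
    have hstep : |ν (k+1) - ν k| ≤ 1/m := by
      rw [hνd k, abs_of_nonneg (by positivity)]
    apply hE w
    · rw [Path.trans_range]
      rintro v (hv | hv)
      · have hb := hBc _ _ (hmem (ν k)) (hdr (ν k)) v hv
        exact hw v (by linarith)
      · obtain ⟨t, rfl⟩ := hv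
        rw [subp_apply]
        set r := ν k + (t:ℝ) * (ν (k+1) - ν k) with hr
        have hoc := (hosc r (ν k) (hspread k t)).1
        have hda' := hdr r
        have htri : dist (a.extend r) (c.extend (ν k)) ≤
            dist (a.extend r) (c.extend r) + dist (c.extend r) (c.extend (ν k)) :=
          dist_triangle _ _ _
        refine hw _ (by linarith)
    · rw [Path.trans_range]
      rintro v (hv | hv)
      · obtain ⟨t, rfl⟩ := hv
        rw [subp_apply]
        have hoc := (hosc _ (ν k) (hspread k t)).1
        exact hw _ (by linarith)
      · have hb := hBc _ _ (hmem (ν (k+1))) (hdr (ν (k+1))) v hv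
        have hoc := (hosc (ν (k+1)) (ν k) (by rwa [show ν (k+1) - ν k = ν (k+1) - ν k from rfl] at hstep)).1
        have htri : dist v (c.extend (ν k)) ≤
            dist v (c.extend (ν (k+1))) + dist (c.extend (ν (k+1))) (c.extend (ν k)) :=
          dist_triangle _ _ _
        exact hw v (by linarith)
  -- the chain induction
  have e0 : FundamentalGroupoid.mk xc = FundamentalGroupoid.mk (c.extend 0) :=
    congrArg _ c.extend_zero.symm
  have e1 : FundamentalGroupoid.mk (a.extend 1) = FundamentalGroupoid.mk ya :=
    congrArg _ a.extend_one
  have main : ∀ k : ℕ,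
      homOf (Bc xc xa h1 h2) ≫ homOf a =
        eqToHom e0 ≫ homOf (subp c 0 (ν k)) ≫
          homOf (Bc (c.extend (ν k)) (a.extend (ν k)) (hmem _) (hdr _)) ≫
          homOf (subp a (ν k) 1) ≫ eqToHom e1 := by
    intro k
    induction k with
    | zero =>
      have hν0 : ν 0 = 0 := by rw [hν]; norm_num
      have hsc : HEq (subp c 0 (ν 0)) (Path.refl (c.extend 0)) := by
        apply path_heq rfl (by rw [hν0])
        intro t
        rw [subp_apply, hν0, Path.refl_apply]
        norm_num
      have hsa : HEq (subp a (ν 0) 1) a := by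
        apply path_heq (by rw [hν0, a.extend_zero]) a.extend_one
        intro t
        rw [subp_apply, hν0, show (0:ℝ) + (t:ℝ) * (1 - 0) = (t:ℝ) by ring]
        exact a.extend_extends' _
      have hsb : HEq (Bc (c.extend (ν 0)) (a.extend (ν 0)) (hmem _) (hdr _))
          (Bc xc xa h1 h2) :=
        bheq (by rw [hν0, c.extend_zero]) (by rw [hν0, a.extend_zero]) _ _ _ _
      rw [hom_of_eq rfl (by rw [hν0] : c.extend (ν 0) = c.extend 0) _ _ hsc,
          hom_of_eq (by rw [hν0, c.extend_zero] : c.extend (ν 0) = xc)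
            (by rw [hν0, a.extend_zero] : a.extend (ν 0) = xa) _ _ hsb,
          hom_of_eq (by rw [hν0, a.extend_zero] : a.extend (ν 0) = xa) a.extend_one _ _ hsa,
          homOf_refl]
      simp
    | succ k ih =>
      have hsplit_a : homOf (subp a (ν k) 1) =
          homOf (subp a (ν k) (ν (k+1))) ≫ homOf (subp a (ν (k+1)) 1) := by
        rw [← homOf_trans]
        exact (homOf_eq_of_homotopic (subp_split a (ν k) (ν (k+1)) 1)).symm
      have hsplit_c : homOf (subp c 0 (ν (k+1))) =
          homOf (subp c 0 (ν k)) ≫ homOf (subp c (ν k) (ν (k+1))) := by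
        rw [← homOf_trans]
        exact (homOf_eq_of_homotopic (subp_split c 0 (ν k) (ν (k+1)))).symm
      have hcell : homOf (Bc (c.extend (ν k)) (a.extend (ν k)) (hmem _) (hdr _)) ≫
            homOf (subp a (ν k) (ν (k+1))) =
          homOf (subp c (ν k) (ν (k+1))) ≫
            homOf (Bc (c.extend (ν (k+1))) (a.extend (ν (k+1))) (hmem _) (hdr _)) := by
        rw [← homOf_trans, ← homOf_trans]
        exact homOf_eq_of_homotopic (cell k)
      rw [ih, hsplit_a, hsplit_c]
      simp only [Category.assoc]
      slice_lhs 3 4 => rw [hcell]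
      simp only [Category.assoc]
  -- conclude from `main m`
  have hfin := main m
  have hc1 : HEq (subp c 0 (ν m)) c := by
    apply path_heq c.extend_zero (by rw [hν1, c.extend_one])
    intro t
    rw [subp_apply, hν1, show (0:ℝ) + (t:ℝ) * (1 - 0) = (t:ℝ) by ring]
    exact c.extend_extends' _
  have hb1 : HEq (Bc (c.extend (ν m)) (a.extend (ν m)) (hmem _) (hdr _))
      (Bc yc ya h3 h4) :=
    bheq (by rw [hν1, c.extend_one]) (by rw [hν1, a.extend_one]) _ _ _ _
  have ha1 : HEq (subp a (ν m) 1) (Path.refl ya) := by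
    apply path_heq (by rw [hν1, a.extend_one]) a.extend_one
    intro t
    rw [subp_apply, hν1, Path.refl_apply, show (1:ℝ) + (t:ℝ) * (1 - 1) = (1:ℝ) by ring,
      a.extend_one]
  rw [hom_of_eq c.extend_zero (by rw [hν1, c.extend_one] : c.extend (ν m) = yc) _ _ hc1,
      hom_of_eq (by rw [hν1, c.extend_one] : c.extend (ν m) = yc)
        (by rw [hν1, a.extend_one] : a.extend (ν m) = ya) _ _ hb1,
      hom_of_eq (by rw [hν1, a.extend_one] : a.extend (ν m) = ya) a.extend_one _ _ ha1,
      homOf_refl] at hfin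
  simp only [Category.assoc, eqToHom_trans, eqToHom_refl, Category.id_comp,
    Category.comp_id, eqToHom_trans_assoc] at hfin
  apply homotopic_of_homOf_eq
  rw [homOf_trans, homOf_trans, hfin]


end Conj
end FinAux

namespace FinAux

open CategoryTheory

section Pi1

variable {X : Type*} [TopologicalSpace X] {Y : Type*} [TopologicalSpace Y]

/-- induced map on path classes -/
noncomputable def qmap {f : X → Y} (hf : Continuous f) {x y : X} :
    (FundamentalGroupoid.mk x ⟶ FundamentalGroupoid.mk y) →
      (FundamentalGroupoid.mk (f x) ⟶ FundamentalGroupoid.mk (f y)) :=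
  Quotient.map (fun p => p.map hf) (fun p q hpq => hpq.map ⟨f, hf⟩)

lemma qmap_homOf {f : X → Y} (hf : Continuous f) {x y : X} (p : Path x y) :
    qmap hf (homOf p) = homOf (p.map hf) := rfl

lemma qmap_comp {f : X → Y} (hf : Continuous f) {x y z : X}
    (u : FundamentalGroupoid.mk x ⟶ FundamentalGroupoid.mk y)
    (v : FundamentalGroupoid.mk y ⟶ FundamentalGroupoid.mk z) :
    qmap hf (u ≫ v) = qmap hf u ≫ qmap hf v := by
  induction u using Quotient.inductionOn with
  | h p =>
    induction v using Quotient.inductionOn with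
    | h q =>
      show qmap hf (homOf p ≫ homOf q) = qmap hf (homOf p) ≫ qmap hf (homOf q)
      rw [← homOf_trans, qmap_homOf, qmap_homOf, qmap_homOf, ← homOf_trans, Path.map_trans]

lemma qmap_id {f : X → Y} (hf : Continuous f) (x : X) :
    qmap hf (𝟙 (FundamentalGroupoid.mk x)) = 𝟙 (FundamentalGroupoid.mk (f x)) := by
  show qmap hf (homOf (Path.refl x)) = homOf (Path.refl (f x))
  rw [qmap_homOf]
  congr 1

lemma homOf_symm_trans {x y : Y} (p : Path x y) :
    homOf p.symm ≫ homOf p = 𝟙 (FundamentalGroupoid.mk y) := by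
  rw [← homOf_trans, ← homOf_refl y]
  exact homOf_eq_of_homotopic ⟨(Path.Homotopy.reflSymmTrans p).symm⟩

lemma homOf_trans_symm {x y : Y} (p : Path x y) :
    homOf p ≫ homOf p.symm = 𝟙 (FundamentalGroupoid.mk x) := by
  rw [← homOf_trans, ← homOf_refl x]
  exact homOf_eq_of_homotopic ⟨(Path.Homotopy.reflTransSymm p).symm⟩

end Pi1

section Conjugation

variable {X : Type} [TopologicalSpace X] {Y : Type*} [TopologicalSpace Y]

lemma all_loops_conj {x₀ : X} {F G : X → Y} (hF : Continuous F) (hG : Continuous G)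
    {N : ℕ} (γs : Fin N → Path x₀ x₀)
    (hgen : Subgroup.closure
        (Set.range fun i => FundamentalGroup.fromPath (X := TopCat.of X) (x := x₀) ⟦γs i⟧)
        = (⊤ : Subgroup (FundamentalGroup (TopCat.of X) x₀)))
    (σF : Path (G x₀) (F x₀))
    (hsig : ∀ i, (σF.trans ((γs i).map hF)).Homotopic (((γs i).map hG).trans σF)) :
    ∀ γ : Path x₀ x₀, (σF.trans (γ.map hF)).Homotopic ((γ.map hG).trans σF) := by
  have key : ∀ h : FundamentalGroup (TopCat.of X) x₀,
      homOf σF ≫ qmap hF h = qmap hG h ≫ homOf σF := by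
    intro h
    have hmem : h ∈ Subgroup.closure
        (Set.range fun i => FundamentalGroup.fromPath (X := TopCat.of X) (x := x₀) ⟦γs i⟧) := by
      rw [hgen]; exact Subgroup.mem_top h
    induction hmem using Subgroup.closure_induction with
    | mem x hx =>
      obtain ⟨i, rfl⟩ := hx
      show homOf σF ≫ qmap hF (homOf (γs i)) = qmap hG (homOf (γs i)) ≫ homOf σF
      rw [qmap_homOf, qmap_homOf, ← homOf_trans, ← homOf_trans]
      exact homOf_eq_of_homotopic (hsig i)
    | one =>
      show homOf σF ≫ qmap hF (𝟙 _) = qmap hG (𝟙 _) ≫ homOf σF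
      rw [qmap_id, qmap_id, Category.comp_id, Category.id_comp]
    | mul x y hx hy ihx ihy =>
      show homOf σF ≫ qmap hF (y ≫ x) = qmap hG (y ≫ x) ≫ homOf σF
      rw [qmap_comp, qmap_comp, ← Category.assoc, ihy, Category.assoc, ihx, Category.assoc]
    | inv x hx ihx =>
      show homOf σF ≫ qmap hF (Groupoid.inv x) = qmap hG (Groupoid.inv x) ≫ homOf σF
      have h1 : qmap hF x ≫ qmap hF (Groupoid.inv x) = 𝟙 _ := by
        rw [← qmap_comp, Groupoid.comp_inv x, qmap_id]
      have h2 : qmap hG (Groupoid.inv x) ≫ qmap hG x = 𝟙 _ := by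
        rw [← qmap_comp, Groupoid.inv_comp x, qmap_id]
      calc homOf σF ≫ qmap hF (Groupoid.inv x)
          = qmap hG (Groupoid.inv x) ≫ (qmap hG x ≫ homOf σF) ≫ qmap hF (Groupoid.inv x) := by
            rw [← Category.assoc, ← Category.assoc, h2, Category.id_comp]
        _ = qmap hG (Groupoid.inv x) ≫ (homOf σF ≫ qmap hF x) ≫ qmap hF (Groupoid.inv x) := by rw [ihx]
        _ = qmap hG (Groupoid.inv x) ≫ homOf σF := by
            simp only [Category.assoc]
            rw [h1, Category.comp_id]
  intro γ
  have := key (FundamentalGroup.fromPath (X := TopCat.of X) (x := x₀) ⟦γ⟧)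
  apply homotopic_of_homOf_eq
  rw [homOf_trans, homOf_trans]
  exact this

end Conjugation
end FinAux

open FinAux CategoryTheory

/-- An abstract finiteness theorem: if `Y` is taut, dominant holomorphic maps `X → Y` are
rigid (two dominant holomorphic maps inducing the same homomorphism on fundamental groups
coincide), no sequence of dominant holomorphic maps is compactly divergent, and `π₁(X)` is
finitely generated by loops lying in a fixed compact connected set `K`, then the set of
dominant holomorphic maps `X → Y` is finite. -/
theorem finite_dominant_of_taut_rigid
    {E : Type} [NormedAddCommGroup E] [NormedSpace ℂ E]
    {E' : Type*} [NormedAddCommGroup E'] [NormedSpace ℂ E']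
    {X : Type} [TopologicalSpace X] [ChartedSpace E X]
    {Y : Type*} [MetricSpace Y] [ChartedSpace E' Y]
    (htaut : IsTautManifold E' Y)
    (x₀ : X)
    (hrigid : ∀ f g : X → Y,
      MDifferentiable 𝓘(ℂ, E) 𝓘(ℂ, E') f → MDifferentiable 𝓘(ℂ, E) 𝓘(ℂ, E') g →
      IsDominantMap f → IsDominantMap g →
      (∀ γ : Path x₀ x₀,
        FreelyHomotopicLoops (fun t => f (γ t)) (fun t => g (γ t))) →
      f = g)
    (hnodiv : ∀ f : ℕ → X → Y,
      (∀ ν, MDifferentiable 𝓘(ℂ, E) 𝓘(ℂ, E') (f ν) ∧ IsDominantMap (f ν)) →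
      ¬ (∀ K : Set X, IsCompact K → ∀ L : Set Y, IsCompact L →
          ∀ᶠ ν in atTop, f ν '' K ∩ L = ∅))
    (K : Set X) (hKcpt : IsCompact K) (hKconn : IsConnected K) (hx₀ : x₀ ∈ K)
    (hgen : ∃ (N : ℕ) (γ : Fin N → Path x₀ x₀), (∀ i t, γ i t ∈ K) ∧
      Subgroup.closure
        (Set.range fun i => FundamentalGroup.fromPath (X := TopCat.of X) (x := x₀) ⟦γ i⟧)
        = (⊤ : Subgroup (FundamentalGroup (TopCat.of X) x₀))) :
    {f : X → Y | MDifferentiable 𝓘(ℂ, E) 𝓘(ℂ, E') f ∧ IsDominantMap f}.Finite := by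
  by_contra hfin
  have hinf : {f : X → Y | MDifferentiable 𝓘(ℂ, E) 𝓘(ℂ, E') f ∧ IsDominantMap f}.Infinite := hfin
  set e := hinf.natEmbedding with hedef
  obtain ⟨φ, hφ, hcase⟩ := htaut E inferInstance inferInstance X inferInstance inferInstance
    (fun ν => (e ν : X → Y)) (fun ν => (e ν).2.1)
  rcases hcase with ⟨g, hg, hconv⟩ | hdiv
  swap
  · exact (hnodiv (fun ν => (e (φ ν) : X → Y)) (fun ν => (e (φ ν)).2)) hdiv
  have hgc : Continuous g := hg.continuous
  have hLc : IsCompact (g '' K) := hKcpt.image hgc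
  obtain ⟨ε, hε, Bc, hchain⟩ := FinAux.conj_setup E' hLc ⟨g x₀, x₀, hx₀, rfl⟩
  obtain ⟨n0, hn0⟩ := Filter.eventually_atTop.mp
    (Metric.tendstoUniformlyOn_iff.mp (hconv K hKcpt) ε hε)
  set F : X → Y := (e (φ n0) : X → Y) with hFdef
  set G : X → Y := (e (φ (n0+1)) : X → Y) with hGdef
  have hFS := (e (φ n0)).2
  have hGS := (e (φ (n0+1))).2
  have hF : Continuous F := hFS.1.continuous
  have hG : Continuous G := hGS.1.continuous
  have hdF : ∀ x ∈ K, dist (F x) (g x) < ε := fun x hx => by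
    rw [dist_comm]; exact hn0 n0 le_rfl x hx
  have hdG : ∀ x ∈ K, dist (G x) (g x) < ε := fun x hx => by
    rw [dist_comm]; exact hn0 (n0+1) (Nat.le_succ _) x hx
  obtain ⟨N, γs, hγsK, hgens⟩ := hgen
  have hgL : g x₀ ∈ g '' K := ⟨x₀, hx₀, rfl⟩
  have hFd : dist (F x₀) (g x₀) < ε := hdF x₀ hx₀
  have hGd : dist (G x₀) (g x₀) < ε := hdG x₀ hx₀
  have hsigF : ∀ i, ((Bc (g x₀) (F x₀) hgL hFd).trans ((γs i).map hF)).Homotopic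
      (((γs i).map hgc).trans (Bc (g x₀) (F x₀) hgL hFd)) := fun i =>
    hchain ((γs i).map hF) ((γs i).map hgc)
      (fun t => ⟨γs i t, hγsK i t, rfl⟩) (fun t => hdF _ (hγsK i t)) hgL hFd hgL hFd
  have hsigG : ∀ i, ((Bc (g x₀) (G x₀) hgL hGd).trans ((γs i).map hG)).Homotopic
      (((γs i).map hgc).trans (Bc (g x₀) (G x₀) hgL hGd)) := fun i =>
    hchain ((γs i).map hG) ((γs i).map hgc)
      (fun t => ⟨γs i t, hγsK i t, rfl⟩) (fun t => hdG _ (hγsK i t)) hgL hGd hgL hGd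
  have hallF := FinAux.all_loops_conj hF hgc γs hgens (Bc (g x₀) (F x₀) hgL hFd) hsigF
  have hallG := FinAux.all_loops_conj hG hgc γs hgens (Bc (g x₀) (G x₀) hgL hGd) hsigG
  set σF : Path (g x₀) (F x₀) := Bc (g x₀) (F x₀) hgL hFd with hσF
  set σG : Path (g x₀) (G x₀) := Bc (g x₀) (G x₀) hgL hGd with hσG
  have hfree : ∀ γ : Path x₀ x₀,
      FreelyHomotopicLoops (fun t => F (γ t)) (fun t => G (γ t)) := by
    intro γ
    set τ : Path (F x₀) (G x₀) := σF.symm.trans σG with hτ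
    have eF : homOf σF ≫ homOf (γ.map hF) = homOf (γ.map hgc) ≫ homOf σF := by
      rw [← homOf_trans, ← homOf_trans]; exact homOf_eq_of_homotopic (hallF γ)
    have eG : homOf σG ≫ homOf (γ.map hG) = homOf (γ.map hgc) ≫ homOf σG := by
      rw [← homOf_trans, ← homOf_trans]; exact homOf_eq_of_homotopic (hallG γ)
    have e1 : homOf (γ.map hF) = homOf σF.symm ≫ homOf (γ.map hgc) ≫ homOf σF := by
      rw [← eF, ← Category.assoc, homOf_symm_trans, Category.id_comp]
    have e2 : homOf (γ.map hgc) = homOf σG ≫ homOf (γ.map hG) ≫ homOf σG.symm := by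
      rw [← Category.assoc, eG, Category.assoc, homOf_trans_symm, Category.comp_id]
    have e3 : homOf (γ.map hF) = homOf (τ.trans ((γ.map hG).trans τ.symm)) := by
      have hτ1 : homOf τ = homOf σF.symm ≫ homOf σG := by rw [hτ, homOf_trans]
      have hτ2 : homOf τ.symm = homOf σG.symm ≫ homOf σF := by
        rw [hτ, Path.trans_symm, homOf_trans, Path.symm_symm]
      rw [homOf_trans τ ((γ.map hG).trans τ.symm), homOf_trans (γ.map hG) τ.symm, hτ1, hτ2, e1, e2]
      simp only [Category.assoc]
    have hbased : (γ.map hF).Homotopic (τ.trans ((γ.map hG).trans τ.symm)) :=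
      homotopic_of_homOf_eq e3
    have hfr := FinAux.freely_trans (FinAux.freely_of_homotopic hbased)
      (FinAux.freely_conj τ (γ.map hG))
    have hcoeF : ⇑(γ.map hF) = fun t => F (γ t) := by rw [Path.map_coe]; rfl
    have hcoeG : ⇑(γ.map hG) = fun t => G (γ t) := by rw [Path.map_coe]; rfl
    rwa [hcoeF, hcoeG] at hfr
  have hFG : F = G := hrigid F G hFS.1 hGS.1 hFS.2 hGS.2 hfree
  have h1 : e (φ n0) = e (φ (n0+1)) := Subtype.ext hFG
  have h2 : φ n0 = φ (n0 + 1) := e.injective h1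
  have h3 : n0 = n0 + 1 := hφ.injective h2
  omega
end
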